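/- Let W be the group of isometries of the Euclidean space ℝ^{k+1} generated by the orthogonal reflections in finitely many linear hyperplanes l_1, ..., l_g through the origin, and suppose each reflection R_i permutes the set {l_1, ..., l_g}. Then W is finite. -/

import Mathlib

open scoped RealInnerProductSpace

/-- Let `W` be the group generated by the reflections `R i` in finitely many
linear hyperplanes `l i = (ℝ ∙ v i)ᗮ` of `ℝ^{k+1}`.  If each reflection permutes
the set of hyperplanes, then `W` is finite. -/
theorem reflection_group_finite {k g : ℕ}
    (v : Fin g → EuclideanSpace ℝ (Fin (k + 1))) (hv : ∀ i, v i ≠ 0)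
    (l : Fin g → Submodule ℝ (EuclideanSpace ℝ (Fin (k + 1))))
    (hl : ∀ i, l i = (ℝ ∙ v i)ᗮ)
    (R : Fin g → (EuclideanSpace ℝ (Fin (k + 1)) ≃ₗᵢ[ℝ] EuclideanSpace ℝ (Fin (k + 1))))
    (hR : ∀ i, R i = Submodule.reflection (l i))
    (hperm : ∀ i j, ∃ m, Submodule.map ((R i).toLinearEquiv.toLinearMap) (l j) = l m) :
    (Subgroup.closure (Set.range R) :
        Set (EuclideanSpace ℝ (Fin (k + 1)) ≃ₗᵢ[ℝ] EuclideanSpace ℝ (Fin (k + 1)))).Finite := by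
  classical
  set W := Subgroup.closure (Set.range R) with hW
  -- normalized normal vectors
  set u : Fin g → EuclideanSpace ℝ (Fin (k + 1)) := fun j => ‖v j‖⁻¹ • v j with hu
  have hvnorm : ∀ j, ‖v j‖ ≠ 0 := fun j => norm_ne_zero_iff.mpr (hv j)
  have hun : ∀ j, ‖u j‖ = 1 := by
    intro j
    simp [hu, norm_smul, inv_mul_cancel₀ (hvnorm j)]
  have hvu : ∀ j, v j = ‖v j‖ • u j := by
    intro j
    simp [hu, smul_smul, mul_inv_cancel₀ (hvnorm j)]
  set S : Set (EuclideanSpace ℝ (Fin (k + 1))) := Set.range u ∪ -Set.range u with hS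
  have hSfin : S.Finite := (Set.finite_range u).union (Set.finite_range u).neg
  have humem : ∀ j, u j ∈ S := fun j => Or.inl ⟨j, rfl⟩
  have hSneg : ∀ x ∈ S, -x ∈ S := by
    rintro x (⟨j, rfl⟩ | hx)
    · exact Or.inr (by simp)
    · exact Or.inl (Set.mem_neg.mp hx)
  have hl' : ∀ j, (l j)ᗮ = ℝ ∙ v j := by
    intro j; rw [hl]; exact Submodule.orthogonal_orthogonal _
  have hu_mem : ∀ j, u j ∈ (l j)ᗮ := by
    intro j; rw [hl']
    exact Submodule.smul_mem _ _ (Submodule.mem_span_singleton_self _)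
  -- each generator maps S into S
  have hgen : ∀ i x, x ∈ S → R i x ∈ S := by
    have key : ∀ i j, R i (u j) ∈ S := by
      intro i j
      obtain ⟨m, hm⟩ := hperm i j
      have h1 : R i (u j) ∈ (l m)ᗮ := by
        rw [Submodule.mem_orthogonal]
        intro y hy
        rw [← hm] at hy
        obtain ⟨z, hz, rfl⟩ := hy
        have hz0 : ⟪z, u j⟫ = 0 :=
          (Submodule.mem_orthogonal (l j) (u j)).mp (hu_mem j) z hz
        have hzz : (R i).toLinearEquiv.toLinearMap z = R i z := rfl
        rw [hzz, (R i).inner_map_map]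
        exact hz0
      rw [hl' m] at h1
      obtain ⟨c, hc⟩ := Submodule.mem_span_singleton.mp h1
      have hc' : R i (u j) = (c * ‖v m‖) • u m := by
        rw [← hc]
        conv_lhs => rw [hvu m]
        rw [smul_smul]
      have hnorm : |c * ‖v m‖| = 1 := by
        have h2 := (R i).norm_map (u j)
        rw [hc', norm_smul, hun m, mul_one, hun j, Real.norm_eq_abs] at h2
        exact h2
      rcases abs_eq (by norm_num : (0:ℝ) ≤ 1) |>.mp hnorm with h | h
      · rw [hc', h, one_smul]; exact humem m
      · rw [hc', h, neg_one_smul]; exact hSneg _ (humem m)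
    rintro i x (⟨j, rfl⟩ | hx)
    · exact key i j
    · have hx' := Set.mem_neg.mp hx
      obtain ⟨j, hj⟩ := hx'
      have : x = -u j := by rw [hj, neg_neg]
      rw [this, show (-u j : EuclideanSpace ℝ (Fin (k + 1))) = (-1 : ℝ) • u j by simp,
        (R i).map_smul, neg_one_smul]
      exact hSneg _ (key i j)
  -- every element of W maps S into S (together with its inverse)
  have hWS : ∀ w ∈ W, (∀ x ∈ S, w x ∈ S) ∧ ∀ x ∈ S, w⁻¹ x ∈ S := by
    intro w hw
    refine Subgroup.closure_induction ?_ ?_ ?_ ?_ hw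
    · rintro x ⟨i, rfl⟩
      have hinv : (R i)⁻¹ = R i := by
        have h3 : (R i).symm = R i := by rw [hR i]; exact Submodule.reflection_symm
        ext y
        rw [LinearIsometryEquiv.coe_inv, h3]
      exact ⟨hgen i, by rw [hinv]; exact hgen i⟩
    · exact ⟨fun x hx => by simpa using hx, fun x hx => by simpa using hx⟩
    · rintro a b ha hb ⟨ha1, ha2⟩ ⟨hb1, hb2⟩
      constructor
      · intro x hx
        rw [LinearIsometryEquiv.coe_mul, Function.comp_apply]
        exact ha1 _ (hb1 _ hx)
      · intro x hx
        rw [mul_inv_rev, LinearIsometryEquiv.coe_mul, Function.comp_apply]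
        exact hb2 _ (ha2 _ hx)
    · rintro a ha ⟨ha1, ha2⟩
      exact ⟨ha2, by simpa using ha1⟩
  -- every element of W fixes Uᗮ pointwise, where U is the span of the v's
  set U : Submodule ℝ (EuclideanSpace ℝ (Fin (k + 1))) :=
    Submodule.span ℝ (Set.range v) with hUdef
  have hfixperp : ∀ w ∈ W, ∀ x ∈ Uᗮ, w x = x := by
    intro w hw
    refine Subgroup.closure_induction ?_ ?_ ?_ ?_ hw
    · rintro x ⟨i, rfl⟩ y hy
      have hle : Uᗮ ≤ l i := by
        rw [hl i]
        refine Submodule.orthogonal_le ?_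
        exact Submodule.span_mono (Set.singleton_subset_iff.mpr ⟨i, rfl⟩)
      rw [hR i]
      exact Submodule.reflection_mem_subspace_eq_self (hle hy)
    · intro y _; rfl
    · intro a b _ _ ha hb y hy
      rw [LinearIsometryEquiv.coe_mul, Function.comp_apply, hb y hy, ha y hy]
    · intro a _ ha y hy
      have h4 := ha y hy
      rw [LinearIsometryEquiv.coe_inv]
      conv_lhs => rw [← h4]
      exact a.symm_apply_apply y
  -- the map recording images of the u j's is injective on W
  set F : (EuclideanSpace ℝ (Fin (k + 1)) ≃ₗᵢ[ℝ] EuclideanSpace ℝ (Fin (k + 1))) →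
      (Fin g → EuclideanSpace ℝ (Fin (k + 1))) := fun w j => w (u j) with hF
  have hinj : Set.InjOn F (W : Set _) := by
    intro w hw w' hw' hEq
    set t := w⁻¹ * w' with ht
    have htW : t ∈ W := mul_mem (inv_mem hw) hw'
    have htu : ∀ j, t (u j) = u j := by
      intro j
      have h5 : w' (u j) = w (u j) := (congrFun hEq j).symm
      rw [ht, LinearIsometryEquiv.coe_mul, Function.comp_apply, h5,
        LinearIsometryEquiv.coe_inv]
      exact w.symm_apply_apply _
    have htall : ∀ x, t x = x := by
      intro x
      set K : Submodule ℝ (EuclideanSpace ℝ (Fin (k + 1))) :=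
        LinearMap.eqLocus (t.toLinearEquiv.toLinearMap) LinearMap.id with hK
      have hUK : U ≤ K := by
        rw [hUdef, Submodule.span_le]
        rintro y ⟨j, rfl⟩
        show t (v j) = v j
        rw [hvu j, t.map_smul, htu j]
      have hUperpK : Uᗮ ≤ K := fun y hy => hfixperp t htW y hy
      have htop : (⊤ : Submodule ℝ (EuclideanSpace ℝ (Fin (k + 1)))) ≤ K := by
        rw [← Submodule.sup_orthogonal_of_hasOrthogonalProjection (K := U)]
        exact sup_le hUK hUperpK
      exact htop Submodule.mem_top
    have h6 : t = 1 := LinearIsometryEquiv.ext fun x => htall x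
    have h7 : w⁻¹ * w' = 1 := h6
    calc w = w * (w⁻¹ * w') := by rw [h7, mul_one]
      _ = w' := by group
  have himg : F '' (W : Set _) ⊆ Set.univ.pi fun _ : Fin g => S := by
    rintro f ⟨w, hw, rfl⟩ j _
    exact (hWS w hw).1 (u j) (humem j)
  have hpi : (Set.univ.pi fun _ : Fin g => S).Finite :=
    Set.Finite.pi fun _ => hSfin
  exact Set.Finite.of_finite_image (hpi.subset himg) hinj
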